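/- arXiv:2305.15784 — 2 statements merged into one kernel-verified Lean document; each statement's English description precedes it below -/
import Mathlib

section
/- Let p be an odd prime, n ≥ 1 an integer, N = p^n, and k an integer. The (k mod N)-monomial minimal solution of (E_N) is irreducible if and only if p does not divide k. Consequently, the number of elements k ∈ Z/NZ for which the k-monomial minimal solution of (E_N) is irreducible equals φ(p^n) = p^{n−1}(p−1), where φ is Euler's totient function. -/
open Matrix

/-- The elementary matrix `[[a, -1], [1, 0]]` over `ZMod N`. -/
def genMat {N : ℕ} (a : ZMod N) : Matrix (Fin 2) (Fin 2) (ZMod N) :=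
  !![a, -1; 1, 0]

/-- `Mword [a₁, …, aₙ]` is the matrix `Mₙ(a₁, …, aₙ) = genMat aₙ * ⋯ * genMat a₁`. -/
def Mword {N : ℕ} (l : List (ZMod N)) : Matrix (Fin 2) (Fin 2) (ZMod N) :=
  (l.reverse.map genMat).prod

/-- A tuple (encoded as a list) is a solution of `(E_N)` if its matrix is `±Id`. -/
def IsSolutionE {N : ℕ} (l : List (ZMod N)) : Prop :=
  Mword l = 1 ∨ Mword l = -1

/-- The size of the `k`-monomial minimal solution of `(E_N)`: the least positive `n`
such that the constant `n`-tuple `(k, …, k)` is a solution of `(E_N)`. -/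
noncomputable def monomialSize (N : ℕ) (k : ZMod N) : ℕ :=
  sInf {n : ℕ | 0 < n ∧ IsSolutionE (List.replicate n k)}

/-- The `k`-monomial minimal solution of `(E_N)`. -/
noncomputable def monoSol (N : ℕ) (k : ZMod N) : List (ZMod N) :=
  List.replicate (monomialSize N k) k

/-- The sum `⊕` of two tuples:
`(a₁,…,aₘ) ⊕ (b₁,…,bₗ) = (a₁+bₗ, a₂, …, aₘ₋₁, aₘ+b₁, b₂, …, bₗ₋₁)`. -/
def oplus {N : ℕ} (a b : List (ZMod N)) : List (ZMod N) :=
  (a.headD 0 + b.getLastD 0) ::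
    ((a.drop 1).dropLast ++ (a.getLastD 0 + b.headD 0) :: (b.drop 1).dropLast)

/-- Two tuples are equivalent (`∼`) if one is obtained from the other by a cyclic
permutation, possibly composed with order reversal. -/
def TupEquiv {N : ℕ} (c d : List (ZMod N)) : Prop :=
  (∃ i, d = c.rotate i) ∨ (∃ i, d = c.reverse.rotate i)

/-- A tuple is reducible if it is equivalent to a sum `a ⊕ b` where `b` is a solution of
`(E_N)` and both `a`, `b` have length at least `3`. -/
def IsReducibleE {N : ℕ} (c : List (ZMod N)) : Prop :=
  ∃ a b : List (ZMod N), 3 ≤ a.length ∧ 3 ≤ b.length ∧ IsSolutionE b ∧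
    TupEquiv c (oplus a b)

/-- An irreducible solution of `(E_N)`: a solution of size at least `3` that is not
reducible (the solution `(0,0)` is not considered irreducible). -/
def IsIrreducibleE {N : ℕ} (c : List (ZMod N)) : Prop :=
  IsSolutionE c ∧ 3 ≤ c.length ∧ ¬ IsReducibleE c

/-- A reducible solution of `(E_N)`: a solution that is not irreducible. -/
def IsReducibleSol {N : ℕ} (c : List (ZMod N)) : Prop :=
  IsSolutionE c ∧ ¬ IsIrreducibleE c

/-- `N` is monomially irreducible if for every nonzero `k ∈ ZMod N` the `k`-monomial
minimal solution of `(E_N)` is irreducible. -/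
def MonomiallyIrreducible (N : ℕ) : Prop :=
  ∀ k : ZMod N, k ≠ 0 → IsIrreducibleE (monoSol N k)

/-- `N` is quasi monomially irreducible if for every integer `k` coprime to `N` the
`(k mod N)`-monomial minimal solution of `(E_N)` is irreducible. -/
def QuasiMonomiallyIrreducible (N : ℕ) : Prop :=
  ∀ k : ℤ, Int.gcd k (N : ℤ) = 1 → IsIrreducibleE (monoSol N (k : ZMod N))

/-- `N` is semi monomially irreducible: if `N` is even but not divisible by `4`, this
requires that for every integer `a` coprime to `N/2` the `(2a mod N)`-monomial minimal
solution of `(E_N)` is irreducible; otherwise (i.e. `N` odd or divisible by `4`), it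
requires the same for every integer `a` coprime to `N`. -/
def SemiMonomiallyIrreducible (N : ℕ) : Prop :=
  if 2 ∣ N ∧ ¬ (4 ∣ N) then
    ∀ a : ℤ, Int.gcd a ((N / 2 : ℕ) : ℤ) = 1 →
      IsIrreducibleE (monoSol N ((2 * a : ℤ) : ZMod N))
  else
    ∀ a : ℤ, Int.gcd a (N : ℤ) = 1 →
      IsIrreducibleE (monoSol N ((2 * a : ℤ) : ZMod N))

/-!
Write `U m = chebU k m`, the `(1,0)` entry of `genMat k ^ m`. The constant tuple `(k, …, k)` of
length `m` is a solution iff `U m = 0` (in `ZMod (p ^ n)` the only square roots of `1` are `±1`),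
and it is reducible iff `U i = ±1` for some `2 ≤ i ≤ m - 2`: a reduction splits off a solution
`(x, k, …, k, y)` with `i - 1` inner entries, which exists exactly when `U i = ±1`.

If `k` is a unit, Cassini's identity `U (i + 1) * U (i - 1) = U i ^ 2 - 1` and
`U (i + 1) + U (i - 1) = k * U i` show, in the local ring `ZMod (p ^ n)`, that `U i = ±1` forces
`U (i - 1) = 0` or `U (i + 1) = 0`, contradicting minimality.

If `k = p ^ s * u` with `s ≥ 1`, expanding `genMat k ^ (2 * t) = (-1) ^ t (1 - k • genMat k) ^ t`
binomially gives `U (2 * t) ≡ -(-1) ^ t * t * k` modulo `p ^ (v_p t + 2 * s)`, while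
`U (2 * t + 1) ≡ (-1) ^ t` modulo `p`. So the minimal solution has size `2 * p ^ (n - s)` (which
is `2` for `k = 0`), and for `s < n` the value `U (2 * p ^ (n - 2 * s) + 1) = ±1` exhibits a
reduction.
-/

open Matrix Finset

namespace MonomialSolution

section Chebyshev

variable {R : Type*} [CommRing R]

/-- `chebU k m = U_{m-1}(k/2)` for the Chebyshev polynomials `U` of the second kind; it is the
`(1,0)` entry of `genMat k ^ m` (`genMat_pow_apply_one_zero`). -/
def chebU (k : R) : ℕ → R
  | 0 => 0
  | 1 => 1
  | j + 2 => k * chebU k (j + 1) - chebU k j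

@[simp] theorem chebU_zero (k : R) : chebU k 0 = 0 := rfl

@[simp] theorem chebU_one (k : R) : chebU k 1 = 1 := rfl

theorem chebU_add_two (k : R) (j : ℕ) : chebU k (j + 2) = k * chebU k (j + 1) - chebU k j := rfl

@[simp] theorem chebU_two (k : R) : chebU k 2 = k := by simp [chebU_add_two]

theorem chebU_add_two_mul_chebU (k : R) (j : ℕ) :
    chebU k (j + 2) * chebU k j = chebU k (j + 1) ^ 2 - 1 := by
  induction j with
  | zero => simp
  | succ j ih =>
    rw [chebU_add_two k (j + 1), chebU_add_two k j] at *
    linear_combination ih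

end Chebyshev

variable {N : ℕ}

theorem genMat_pow_succ (k : ZMod N) (j : ℕ) :
    genMat k ^ (j + 1) = !![chebU k (j + 2), -chebU k (j + 1); chebU k (j + 1), -chebU k j] := by
  induction j with
  | zero => simp [genMat]
  | succ j ih =>
    rw [pow_succ, ih, genMat, mul_fin_two, chebU_add_two k (j + 1), chebU_add_two k j]
    ext i j
    fin_cases i <;> fin_cases j <;> simp <;> ring

theorem genMat_pow_apply_one_zero (k : ZMod N) (m : ℕ) : (genMat k ^ m) 1 0 = chebU k m := by
  cases m with
  | zero => simp
  | succ j => simp [genMat_pow_succ]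

theorem Mword_replicate (k : ZMod N) (m : ℕ) : Mword (List.replicate m k) = genMat k ^ m := by
  simp [Mword, List.prod_replicate]

theorem Mword_cons_replicate_append (k x y : ZMod N) (i : ℕ) :
    Mword (x :: (List.replicate i k ++ [y])) = genMat y * genMat k ^ i * genMat x := by
  simp [Mword, List.prod_replicate, mul_assoc]

theorem chebU_eq_zero_of_isSolutionE {k : ZMod N} {m : ℕ}
    (h : IsSolutionE (List.replicate m k)) : chebU k m = 0 := by
  rw [← genMat_pow_apply_one_zero, ← Mword_replicate]
  rcases h with h | h <;> simp [h]

theorem genMat_sq (k : ZMod N) : genMat k ^ 2 = (-1 : ZMod N) • (1 + (-k) • genMat k) := by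
  rw [genMat, sq, mul_fin_two]
  ext i j
  fin_cases i <;> fin_cases j <;> simp

-- Expand `genMat k ^ (2 * t) = (-1) ^ t • (1 - k • genMat k) ^ t` binomially.
theorem chebU_two_mul_add (k : ZMod N) (t r : ℕ) :
    chebU k (2 * t + r) =
      (-1) ^ t * ∑ j ∈ range (t + 1), (-k) ^ j * t.choose j * chebU k (j + r) := by
  have hexp : genMat k ^ (2 * t + r) =
      (-1 : ZMod N) ^ t •
        ∑ j ∈ range (t + 1), ((-k) ^ j * t.choose j) • genMat k ^ (j + r) := by
    have hc : Commute ((-k) • genMat k) 1 := Commute.one_right _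
    rw [pow_add, pow_mul, genMat_sq, smul_pow, add_comm, hc.add_pow, smul_mul_assoc,
      Finset.sum_mul]
    congr 1
    refine Finset.sum_congr rfl fun j _ => ?_
    rw [one_pow, mul_one, smul_pow, pow_add, ← Nat.cast_comm, ← nsmul_eq_mul,
      ← Nat.cast_smul_eq_nsmul (ZMod N)]
    simp only [smul_mul_assoc, mul_smul]
    rw [smul_comm]
  rw [← genMat_pow_apply_one_zero, hexp]
  simp [Matrix.sum_apply, genMat_pow_apply_one_zero, mul_assoc]

section LocalRing

variable {R : Type*} [CommRing R] [IsLocalRing R]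

theorem eq_zero_or_eq_zero_of_mul_eq_zero_of_isUnit_add {a b : R} (h : a * b = 0)
    (hab : IsUnit (a + b)) : a = 0 ∨ b = 0 := by
  rcases IsLocalRing.isUnit_or_isUnit_of_isUnit_add hab with ha | hb
  · exact Or.inr (ha.mul_right_eq_zero.mp h)
  · exact Or.inl (hb.mul_left_eq_zero.mp h)

theorem eq_one_or_eq_neg_one_of_sq_eq_one (h2 : IsUnit (2 : R)) {x : R} (hx : x ^ 2 = 1) :
    x = 1 ∨ x = -1 := by
  have h := eq_zero_or_eq_zero_of_mul_eq_zero_of_isUnit_add (a := 1 - x) (b := 1 + x)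
    (by linear_combination -hx) (by rwa [sub_add_add_cancel, one_add_one_eq_two])
  rcases h with h | h
  · exact Or.inl (by linear_combination -h)
  · exact Or.inr (by linear_combination h)

end LocalRing

theorem isSolutionE_replicate_iff [IsLocalRing (ZMod N)] (h2 : IsUnit (2 : ZMod N))
    {k : ZMod N} {m : ℕ} : IsSolutionE (List.replicate m k) ↔ chebU k m = 0 := by
  refine ⟨chebU_eq_zero_of_isSolutionE, fun h => ?_⟩
  cases m with
  | zero => exact Or.inl (by simp [Mword])
  | succ j =>
    have hj2 : chebU k (j + 2) = -chebU k j := by rw [chebU_add_two, h]; ring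
    have hsq : chebU k j ^ 2 = 1 := by
      have := chebU_add_two_mul_chebU k j
      rw [h, hj2] at this
      linear_combination -this
    have hpow : genMat k ^ (j + 1) = -chebU k j • 1 := by
      rw [genMat_pow_succ, h, hj2]
      ext a b
      fin_cases a <;> fin_cases b <;> simp
    rw [IsSolutionE, Mword_replicate, hpow]
    rcases eq_one_or_eq_neg_one_of_sq_eq_one h2 hsq with h1 | h1 <;> simp [h1]

theorem exists_pos_isSolutionE_replicate [NeZero N] (k : ZMod N) :
    ∃ m, 0 < m ∧ IsSolutionE (List.replicate m k) := by
  obtain ⟨u, hu⟩ : IsUnit (genMat k) := by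
    rw [Matrix.isUnit_iff_isUnit_det, genMat, det_fin_two_of]
    simp
  refine ⟨orderOf u, orderOf_pos u, Or.inl ?_⟩
  rw [Mword_replicate, ← hu, ← Units.val_pow_eq_pow_val, pow_orderOf_eq_one, Units.val_one]

theorem monomialSize_pos_and_isSolutionE [NeZero N] (k : ZMod N) :
    0 < monomialSize N k ∧ IsSolutionE (List.replicate (monomialSize N k) k) :=
  Nat.sInf_mem (exists_pos_isSolutionE_replicate k)

theorem monomialSize_le {k : ZMod N} {m : ℕ} (hm : 0 < m)
    (h : IsSolutionE (List.replicate m k)) : monomialSize N k ≤ m :=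
  Nat.sInf_le ⟨hm, h⟩

theorem monomialSize_eq [IsLocalRing (ZMod N)] (h2 : IsUnit (2 : ZMod N)) {k : ZMod N} {M : ℕ}
    (hM : 0 < M) (h0 : chebU k M = 0) (hmin : ∀ m, 0 < m → chebU k m = 0 → M ≤ m) :
    monomialSize N k = M :=
  IsLeast.csInf_eq ⟨⟨hM, (isSolutionE_replicate_iff h2).mpr h0⟩,
    fun m hm => hmin m hm.1 (chebU_eq_zero_of_isSolutionE hm.2)⟩

theorem genMat_mul_mul_genMat_eq_smul_one_iff (x y c : ZMod N)
    (X : Matrix (Fin 2) (Fin 2) (ZMod N)) :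
    genMat y * X * genMat x = c • 1 ↔ X = c • !![-1, x; -y, x * y - 1] := by
  have hl : !![0, 1; -1, y] * genMat y = 1 := by
    rw [genMat, mul_fin_two, one_fin_two]; simp
  have hr : genMat x * !![0, 1; -1, x] = 1 := by
    rw [genMat, mul_fin_two, one_fin_two]; simp
  constructor
  · intro h
    calc X = !![0, 1; -1, y] * (genMat y * X * genMat x) * !![0, 1; -1, x] := by
          rw [← mul_assoc, ← mul_assoc, hl, one_mul, mul_assoc, hr, mul_one]
      _ = c • !![-1, x; -y, x * y - 1] := by
          rw [h, mul_smul_comm, mul_one, smul_mul_assoc, mul_fin_two]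
          congr 1
          ext a b
          fin_cases a <;> fin_cases b <;> simp
          ring
  · rintro rfl
    rw [mul_smul_comm, smul_mul_assoc]
    simp only [genMat, mul_fin_two, one_fin_two]
    congr 1
    ext a b
    fin_cases a <;> fin_cases b <;> simp
    ring

theorem genMat_pow_apply_zero_zero (k : ZMod N) (m : ℕ) :
    (genMat k ^ m) 0 0 = chebU k (m + 1) := by
  cases m with
  | zero => simp
  | succ j => simp [genMat_pow_succ]

theorem exists_eq_cons_append_singleton {α : Type*} (l : List α) (h : 2 ≤ l.length) :
    ∃ x c y, l = x :: (c ++ [y]) := by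
  match l, h with
  | x :: l', h =>
    rcases l'.eq_nil_or_concat with rfl | ⟨c, y, rfl⟩
    · simp at h
    · exact ⟨x, c, y, by simp⟩

theorem oplus_cons_append_singleton (c d : List (ZMod N)) (z w x y : ZMod N) :
    oplus (z :: (c ++ [w])) (x :: (d ++ [y])) = (z + y) :: (c ++ (w + x) :: d) := by
  have hlast : ∀ (u v : ZMod N) (l : List (ZMod N)), (u :: (l ++ [v])).getLastD 0 = v := by
    intro u v l
    rw [← List.cons_append, List.getLastD_concat]
  rw [oplus, hlast, hlast]
  simp

theorem chebU_eq_one_or_eq_neg_one_of_isSolutionE {k x y : ZMod N} {i : ℕ}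
    (h : IsSolutionE (x :: (List.replicate i k ++ [y]))) :
    chebU k (i + 1) = 1 ∨ chebU k (i + 1) = -1 := by
  have key : ∀ ε : ZMod N, genMat y * genMat k ^ i * genMat x = ε • 1 →
      chebU k (i + 1) = -ε := by
    intro ε h
    rw [← genMat_pow_apply_zero_zero, (genMat_mul_mul_genMat_eq_smul_one_iff x y ε _).mp h]
    simp
  rw [IsSolutionE, Mword_cons_replicate_append] at h
  rcases h with h | h
  · exact Or.inr (key 1 (by rw [h, one_smul]))
  · exact Or.inl (by simpa using key (-1) (by rw [h, neg_one_smul]))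

theorem isSolutionE_cons_replicate_append {k : ZMod N} {j : ℕ}
    (he : chebU k (j + 2) = 1 ∨ chebU k (j + 2) = -1) :
    IsSolutionE (chebU k (j + 2) * chebU k (j + 1) ::
      (List.replicate (j + 1) k ++ [chebU k (j + 2) * chebU k (j + 1)])) := by
  obtain ⟨e, he_def⟩ : ∃ e, chebU k (j + 2) = e := ⟨_, rfl⟩
  rw [he_def] at he ⊢
  have hee : e * e = 1 := by rcases he with h | h <;> rw [h] <;> ring
  have hcas := chebU_add_two_mul_chebU k j
  rw [he_def] at hcas
  have hsol : genMat (e * chebU k (j + 1)) * genMat k ^ (j + 1) * genMat (e * chebU k (j + 1)) =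
      -e • 1 := by
    rw [genMat_mul_mul_genMat_eq_smul_one_iff, genMat_pow_succ, he_def]
    ext a b
    fin_cases a <;> fin_cases b <;> simp
    · linear_combination -chebU k (j + 1) * hee
    · linear_combination -chebU k (j + 1) * hee
    · linear_combination (-chebU k j - e * chebU k (j + 1) ^ 2) * hee + e * hcas
  rw [IsSolutionE, Mword_cons_replicate_append, hsol]
  rcases he with h | h <;> simp [h]

theorem isReducibleE_replicate_iff (k : ZMod N) (M : ℕ) :
    IsReducibleE (List.replicate M k) ↔
      ∃ m, 2 ≤ m ∧ m + 2 ≤ M ∧ (chebU k m = 1 ∨ chebU k m = -1) := by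
  constructor
  · rintro ⟨a, b, ha, hb, hsol, hequiv⟩
    have hab : oplus a b = List.replicate M k := by
      rcases hequiv with ⟨r, hr⟩ | ⟨r, hr⟩ <;> simp [hr]
    obtain ⟨z, c, w, rfl⟩ := exists_eq_cons_append_singleton a (by omega)
    obtain ⟨x, d, y, rfl⟩ := exists_eq_cons_append_singleton b (by omega)
    rw [oplus_cons_append_singleton] at hab
    have hd : d = List.replicate d.length k :=
      List.eq_replicate_iff.mpr
        ⟨rfl, fun u hu => List.eq_of_mem_replicate (by rw [← hab]; simp [hu])⟩
    have hlen := congrArg List.length hab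
    simp only [List.length_cons, List.length_append, List.length_replicate, List.length_nil]
      at hlen ha hb
    rw [hd] at hsol
    exact ⟨d.length + 1, by omega, by omega, chebU_eq_one_or_eq_neg_one_of_isSolutionE hsol⟩
  · rintro ⟨m, hm2, hmM, he⟩
    obtain ⟨j, rfl⟩ : ∃ j, m = j + 2 := ⟨m - 2, by omega⟩
    set x := chebU k (j + 2) * chebU k (j + 1)
    refine ⟨(k - x) :: (List.replicate (M - j - 3) k ++ [k - x]),
      x :: (List.replicate (j + 1) k ++ [x]), by simp; omega, by simp,
      isSolutionE_cons_replicate_append he, Or.inl ⟨0, ?_⟩⟩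
    rw [List.rotate_zero, oplus_cons_append_singleton, sub_add_cancel, ← List.replicate_succ,
      List.replicate_append_replicate, ← List.replicate_succ]
    congr 1
    omega

theorem isIrreducibleE_monoSol_of_isUnit [NeZero N] [IsLocalRing (ZMod N)]
    (h2 : IsUnit (2 : ZMod N)) {k : ZMod N} (hk : IsUnit k) : IsIrreducibleE (monoSol N k) := by
  obtain ⟨hMpos, hsol⟩ := monomialSize_pos_and_isSolutionE k
  set M := monomialSize N k
  have hV : chebU k M = 0 := chebU_eq_zero_of_isSolutionE hsol
  have hmin : ∀ m, 0 < m → chebU k m = 0 → M ≤ m := fun m hm h =>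
    monomialSize_le hm ((isSolutionE_replicate_iff h2).mpr h)
  have hM3 : 3 ≤ M := by
    have hM1 : M ≠ 1 := fun h => by simp [h] at hV
    have hM2 : M ≠ 2 := fun h => hk.ne_zero (by rwa [h, chebU_two] at hV)
    omega
  refine ⟨hsol, by simpa [monoSol] using hM3, ?_⟩
  rw [monoSol, isReducibleE_replicate_iff]
  rintro ⟨m, hm2, hmM, he⟩
  obtain ⟨j, rfl⟩ : ∃ j, m = j + 1 := ⟨m - 1, by omega⟩
  -- Cassini's identity makes the neighbours of a `±1` multiply to `0`, while they add up to `±k`.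
  have hprod : chebU k (j + 2) * chebU k j = 0 := by
    rw [chebU_add_two_mul_chebU]
    rcases he with h | h <;> simp [h]
  have hsum : IsUnit (chebU k (j + 2) + chebU k j) := by
    rw [chebU_add_two, sub_add_cancel]
    rcases he with h | h <;> simp [h, hk]
  rcases eq_zero_or_eq_zero_of_mul_eq_zero_of_isUnit_add hprod hsum with h | h
  · have := hmin _ (by omega) h
    omega
  · have := hmin _ (by omega) h
    omega

theorem factorization_le_sub_two {p j : ℕ} (hp : p.Prime) (hp2 : p ≠ 2) (hj : 2 ≤ j) :
    j.factorization p ≤ j - 2 := by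
  by_contra! h
  have h3 : 3 ≤ p := by have := hp.two_le; omega
  have hlt : j - 2 < 3 ^ (j - 2) := Nat.lt_pow_self (by norm_num)
  have : 3 ^ (j - 1) ≤ j :=
    calc 3 ^ (j - 1) ≤ p ^ (j - 1) := Nat.pow_le_pow_left h3 _
      _ ≤ p ^ j.factorization p := Nat.pow_le_pow_right hp.pos (by omega)
      _ ≤ j := Nat.ordProj_le p (by omega)
  rw [show j - 1 = j - 2 + 1 by omega, pow_succ] at this
  omega

theorem pow_dvd_choose_mul_pow {p s a t j : ℕ} (hp : p.Prime) (hp2 : p ≠ 2) (hs : 1 ≤ s)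
    (hj : 2 ≤ j) (hat : p ^ a ∣ t) : p ^ (a + 2 * s) ∣ t.choose j * p ^ (s * j) := by
  rcases lt_or_ge t j with htj | hjt
  · simp [Nat.choose_eq_zero_of_lt htj]
  have hC : t.choose j ≠ 0 := (Nat.choose_pos hjt).ne'
  have ha : a ≤ t.factorization p := (hp.pow_dvd_iff_le_factorization (by omega)).mp hat
  -- `t * (t - 1).choose (j - 1) = j * t.choose j`
  have hvt : t.factorization p ≤ (t.choose j).factorization p + j.factorization p := by
    obtain ⟨t, rfl⟩ : ∃ t', t = t' + 1 := ⟨t - 1, by omega⟩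
    obtain ⟨j, rfl⟩ : ∃ j', j = j' + 1 := ⟨j - 1, by omega⟩
    have hid := congrArg (fun m => m.factorization p) (Nat.add_one_mul_choose_eq t j)
    rw [Nat.factorization_mul (by omega) (Nat.choose_pos (by omega)).ne',
      Nat.factorization_mul hC (by omega)] at hid
    simp only [Finsupp.add_apply] at hid
    omega
  have hvj := factorization_le_sub_two hp hp2 hj
  have hsj : j - 2 ≤ s * (j - 2) := Nat.le_mul_of_pos_left _ hs
  have hpow : p ^ (s * j) ≠ 0 := pow_ne_zero _ hp.ne_zero
  rw [hp.pow_dvd_iff_le_factorization (Nat.mul_ne_zero hC hpow), Nat.factorization_mul hC hpow,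
    Finsupp.add_apply, hp.factorization_pow, Finsupp.single_eq_same]
  have : s * j = s * (j - 2) + 2 * s := by
    rw [Nat.mul_sub, mul_comm 2 s]; have : s * 2 ≤ s * j := Nat.mul_le_mul_left s hj; omega
  omega

theorem pow_dvd_neg_pow_mul_choose {R : Type*} [CommRing R] {p s a t j : ℕ} (hp : p.Prime)
    (hp2 : p ≠ 2) (hs : 1 ≤ s) (hj : 2 ≤ j) (hat : p ^ a ∣ t) {k : R}
    (hk : (p : R) ^ s ∣ k) :
    (p : R) ^ (a + 2 * s) ∣ (-k) ^ j * t.choose j := by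
  obtain ⟨w, rfl⟩ := hk
  have h := Nat.cast_dvd_cast (α := R) (pow_dvd_choose_mul_pow hp hp2 hs hj hat)
  push_cast at h
  exact h.trans ⟨(-w) ^ j, by ring⟩

/-- Modulo `p ^ (a + 2 * s)`, only the terms `j = 0, 1` of `chebU_two_mul_add` survive when
`p ^ s ∣ k` and `p ^ a ∣ t`. -/
theorem pow_dvd_chebU_two_mul_add_sub {p s a t : ℕ} (hp : p.Prime) (hp2 : p ≠ 2) (hs : 1 ≤ s)
    (hat : p ^ a ∣ t) {k : ZMod N} (hk : (p : ZMod N) ^ s ∣ k) (r : ℕ) :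
    (p : ZMod N) ^ (a + 2 * s) ∣
      chebU k (2 * t + r) - (-1) ^ t * (chebU k r - t * k * chebU k (r + 1)) := by
  rw [chebU_two_mul_add]
  cases t with
  | zero => simp
  | succ t =>
    rw [Finset.sum_range_succ', Finset.sum_range_succ']
    have hrest : ∀ j ∈ range t, (p : ZMod N) ^ (a + 2 * s) ∣
        (-k) ^ (j + 1 + 1) * ((t + 1).choose (j + 1 + 1) : ZMod N) * chebU k (j + 1 + 1 + r) :=
      fun j _ => (pow_dvd_neg_pow_mul_choose hp hp2 hs (by omega) hat hk).mul_right _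
    convert (Finset.dvd_sum hrest).mul_left ((-1 : ZMod N) ^ (t + 1)) using 1
    simp only [zero_add, Nat.choose_zero_right, Nat.choose_one_right]
    rw [add_comm 1 r]
    push_cast
    ring

section PrimePower

variable {p n : ℕ} [hp : Fact p.Prime]

theorem natCast_pow_eq_zero_iff {s : ℕ} : (p : ZMod (p ^ n)) ^ s = 0 ↔ n ≤ s := by
  rw [← Nat.cast_pow, ZMod.natCast_eq_zero_iff, Nat.pow_dvd_pow_iff_le_right hp.out.one_lt]

theorem pow_mul_eq_zero_iff {s : ℕ} {u : ZMod (p ^ n)} (hu : IsUnit u) :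
    (p : ZMod (p ^ n)) ^ s * u = 0 ↔ n ≤ s := by
  rw [hu.mul_left_eq_zero, natCast_pow_eq_zero_iff]

theorem isUnit_add_natCast_mul {u : ZMod (p ^ n)} (hu : IsUnit u) (z : ZMod (p ^ n)) :
    IsUnit (u + p * z) :=
  IsNilpotent.isUnit_add_left_of_commute
    ((Commute.all _ _).isNilpotent_mul_right ⟨n, natCast_pow_eq_zero_iff.mpr le_rfl⟩) hu
    (Commute.all _ _)

theorem exists_eq_pow_mul (x : ZMod (p ^ n)) :
    ∃ s u, s ≤ n ∧ IsUnit u ∧ x = (p : ZMod (p ^ n)) ^ s * u := by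
  rcases eq_or_ne x 0 with rfl | hx
  · exact ⟨n, 1, le_rfl, isUnit_one, by rw [mul_one, natCast_pow_eq_zero_iff.mpr le_rfl]⟩
  have : NeZero (p ^ n) := ⟨pow_ne_zero n hp.out.ne_zero⟩
  obtain ⟨s, m, hpm, hval⟩ :=
    Nat.exists_eq_pow_mul_and_not_dvd ((ZMod.val_ne_zero x).mpr hx) p hp.out.ne_one
  have hm : IsUnit (m : ZMod (p ^ n)) :=
    (ZMod.isUnit_iff_coprime m _).mpr ((hp.out.coprime_iff_not_dvd.mpr hpm).symm.pow_right n)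
  have hxsm : x = (p : ZMod (p ^ n)) ^ s * m := by
    rw [← ZMod.natCast_zmod_val x, hval]
    push_cast
    ring
  refine ⟨s, m, ?_, hm, hxsm⟩
  by_contra! hns
  exact hx (hxsm.trans ((pow_mul_eq_zero_iff hm).mpr hns.le))

theorem isLocalRing_zmod_pow (hn : n ≠ 0) : IsLocalRing (ZMod (p ^ n)) :=
  have : Fact (1 < p ^ n) := ⟨Nat.one_lt_pow hn hp.out.one_lt⟩
  IsLocalRing.of_isUnit_or_isUnit_one_sub_self fun x => by
    obtain ⟨s, u, -, hu, rfl⟩ := exists_eq_pow_mul x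
    rcases s with _ | s
    · exact Or.inl (by simpa using hu)
    · right
      simpa [pow_succ', sub_eq_add_neg, mul_assoc] using
        isUnit_add_natCast_mul isUnit_one (-((p : ZMod (p ^ n)) ^ s * u))

theorem isUnit_two_zmod_pow (hp2 : p ≠ 2) : IsUnit (2 : ZMod (p ^ n)) := by
  rw [← Nat.cast_ofNat, ZMod.isUnit_iff_coprime]
  exact ((Nat.coprime_primes Nat.prime_two hp.out).mpr hp2.symm).pow_right n

theorem isUnit_intCast_zmod_pow_iff (hn : n ≠ 0) (k : ℤ) :
    IsUnit (k : ZMod (p ^ n)) ↔ ¬ (p : ℤ) ∣ k := by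
  rw [ZMod.coe_int_isUnit_iff_isCoprime, Nat.cast_pow, IsCoprime.pow_left_iff (by omega),
    (Nat.prime_iff_prime_int.mp hp.out).coprime_iff_not_dvd]

theorem chebU_two_mul_pow_sub (hp2 : p ≠ 2) {s : ℕ} (hs : 1 ≤ s) (hsn : s ≤ n)
    (u : ZMod (p ^ n)) : chebU ((p : ZMod (p ^ n)) ^ s * u) (2 * p ^ (n - s)) = 0 := by
  have h := pow_dvd_chebU_two_mul_add_sub hp.out hp2 hs (dvd_refl (p ^ (n - s)))
    (dvd_mul_right _ u) 0
  rw [natCast_pow_eq_zero_iff.mpr (by omega), zero_dvd_iff, sub_eq_zero, add_zero] at h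
  rw [h, chebU_zero, chebU_one]
  push_cast
  rw [← mul_assoc, ← pow_add, Nat.sub_add_cancel hsn, natCast_pow_eq_zero_iff.mpr le_rfl]
  simp

theorem chebU_two_mul_ne_zero (hp2 : p ≠ 2) {s : ℕ} (hs : 1 ≤ s) {u : ZMod (p ^ n)}
    (hu : IsUnit u) {t : ℕ} (ht0 : t ≠ 0) (ht : t < p ^ (n - s)) :
    chebU ((p : ZMod (p ^ n)) ^ s * u) (2 * t) ≠ 0 := by
  obtain ⟨v, t', ht'p, rfl⟩ := Nat.exists_eq_pow_mul_and_not_dvd ht0 p hp.out.ne_one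
  have hvs : v + s < n := by
    have : p ^ v < p ^ (n - s) :=
      (Nat.le_mul_of_pos_right _ (Nat.pos_of_ne_zero (right_ne_zero_of_mul ht0))).trans_lt ht
    have := (Nat.pow_lt_pow_iff_right hp.out.one_lt).mp this
    omega
  have ht' : IsUnit (t' : ZMod (p ^ n)) :=
    (ZMod.isUnit_iff_coprime t' _).mpr ((hp.out.coprime_iff_not_dvd.mpr ht'p).symm.pow_right n)
  obtain ⟨z, hz⟩ := pow_dvd_chebU_two_mul_add_sub hp.out hp2 hs (dvd_mul_right (p ^ v) t')
    (dvd_mul_right _ u) 0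
  obtain ⟨s, rfl⟩ : ∃ s', s = s' + 1 := ⟨s - 1, by omega⟩
  have key : chebU ((p : ZMod (p ^ n)) ^ (s + 1) * u) (2 * (p ^ v * t')) =
      p ^ (v + (s + 1)) * ((-1) ^ (p ^ v * t' + 1) * (t' * u) + p * (p ^ s * z)) := by
    rw [chebU_zero, chebU_one] at hz
    push_cast at hz
    linear_combination hz
  rw [key, Ne, pow_mul_eq_zero_iff (isUnit_add_natCast_mul (((isUnit_one.neg).pow _).mul
    (ht'.mul hu)) _)]
  omega

theorem isUnit_chebU_two_mul_add_one (hp2 : p ≠ 2) {k : ZMod (p ^ n)}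
    (hk : (p : ZMod (p ^ n)) ∣ k) (t : ℕ) : IsUnit (chebU k (2 * t + 1)) := by
  obtain ⟨z, hz⟩ := pow_dvd_chebU_two_mul_add_sub hp.out hp2 le_rfl (pow_zero p ▸ one_dvd t)
    (k := k) (by rwa [pow_one]) 1
  obtain ⟨w, rfl⟩ := hk
  have key : chebU ((p : ZMod (p ^ n)) * w) (2 * t + 1) =
      (-1) ^ t + p * ((-1) ^ (t + 1) * t * p * w ^ 2 + p * z) := by
    rw [chebU_one, chebU_two] at hz
    linear_combination hz
  rw [key]
  exact isUnit_add_natCast_mul ((isUnit_one.neg).pow t) _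

theorem chebU_two_mul_pow_add_one (hp2 : p ≠ 2) {s : ℕ} (hs : 1 ≤ s) (u : ZMod (p ^ n)) :
    chebU ((p : ZMod (p ^ n)) ^ s * u) (2 * p ^ (n - 2 * s) + 1) = (-1) ^ p ^ (n - 2 * s) := by
  have h := pow_dvd_chebU_two_mul_add_sub hp.out hp2 hs (dvd_refl (p ^ (n - 2 * s)))
    (dvd_mul_right _ u) 1
  rw [natCast_pow_eq_zero_iff.mpr (by omega), zero_dvd_iff, sub_eq_zero, chebU_one,
    chebU_two] at h
  have hzero : ((p ^ (n - 2 * s) : ℕ) : ZMod (p ^ n)) * ((p : ZMod (p ^ n)) ^ s * u) *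
      ((p : ZMod (p ^ n)) ^ s * u) = 0 := by
    push_cast
    rw [show (p : ZMod (p ^ n)) ^ (n - 2 * s) * (p ^ s * u) * (p ^ s * u) =
      p ^ (n - 2 * s + 2 * s) * u ^ 2 by ring, natCast_pow_eq_zero_iff.mpr (by omega), zero_mul]
  rw [h, hzero, sub_zero, mul_one]

theorem monomialSize_pow_mul (hp2 : p ≠ 2) {s : ℕ} (hs : 1 ≤ s) (hsn : s ≤ n)
    {u : ZMod (p ^ n)} (hu : IsUnit u) :
    monomialSize (p ^ n) ((p : ZMod (p ^ n)) ^ s * u) = 2 * p ^ (n - s) := by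
  have := isLocalRing_zmod_pow (p := p) (n := n) (by omega)
  refine monomialSize_eq (isUnit_two_zmod_pow hp2)
    (Nat.mul_pos two_pos (pow_pos hp.out.pos _))
    (chebU_two_mul_pow_sub hp2 hs hsn u) fun m hm hm0 => ?_
  obtain ⟨t, rfl | rfl⟩ := Nat.even_or_odd' m
  · by_contra! h
    exact chebU_two_mul_ne_zero hp2 hs hu (by omega) (by omega) hm0
  · exact absurd hm0 (isUnit_chebU_two_mul_add_one hp2
      (dvd_mul_of_dvd_left (dvd_pow_self _ (by omega)) u) t).ne_zero

theorem not_isIrreducibleE_monoSol_pow_mul (hp2 : p ≠ 2) {s : ℕ} (hs : 1 ≤ s) (hsn : s ≤ n)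
    {u : ZMod (p ^ n)} (hu : IsUnit u) :
    ¬ IsIrreducibleE (monoSol (p ^ n) ((p : ZMod (p ^ n)) ^ s * u)) := by
  rintro ⟨-, hlen, hred⟩
  rw [monoSol, monomialSize_pow_mul hp2 hs hsn hu] at hlen hred
  rw [List.length_replicate] at hlen
  have hsn' : s < n := by
    by_contra! h
    rw [Nat.sub_eq_zero_of_le h, pow_zero] at hlen
    omega
  have hpow : 3 * p ^ (n - 2 * s) ≤ p ^ (n - s) :=
    calc 3 * p ^ (n - 2 * s) ≤ p ^ (n - 2 * s) * p := by
          rw [mul_comm]; exact Nat.mul_le_mul_left _ (hp.out.two_le.lt_of_ne' hp2)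
      _ = p ^ (n - 2 * s + 1) := (pow_succ _ _).symm
      _ ≤ p ^ (n - s) := Nat.pow_le_pow_right hp.out.pos (by omega)
  have hpos : 0 < p ^ (n - 2 * s) := pow_pos hp.out.pos _
  refine hred ((isReducibleE_replicate_iff _ _).mpr
    ⟨2 * p ^ (n - 2 * s) + 1, by omega, by omega, ?_⟩)
  rw [chebU_two_mul_pow_add_one hp2 hs u]
  exact neg_one_pow_eq_or _ _

theorem isIrreducibleE_monoSol_iff_isUnit (hp2 : p ≠ 2) (hn : n ≠ 0) (k : ZMod (p ^ n)) :
    IsIrreducibleE (monoSol (p ^ n) k) ↔ IsUnit k := by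
  have := isLocalRing_zmod_pow (p := p) hn
  have : NeZero (p ^ n) := ⟨pow_ne_zero n hp.out.ne_zero⟩
  refine ⟨fun h => ?_, isIrreducibleE_monoSol_of_isUnit (isUnit_two_zmod_pow hp2)⟩
  by_contra hk
  obtain ⟨s, u, hsn, hu, rfl⟩ := exists_eq_pow_mul k
  rcases Nat.eq_zero_or_pos s with rfl | hs
  · exact hk (by simpa using hu)
  · exact not_isIrreducibleE_monoSol_pow_mul hp2 hs hsn hu h

end PrimePower

end MonomialSolution

/-- for `p` an odd prime, `n ≥ 1` and `N = p^n`, the `(k mod N)`-monomial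
minimal solution of `(E_N)` is irreducible iff `p ∤ k`; consequently the number of
`k ∈ ZMod N` with irreducible `k`-monomial minimal solution is `φ(p^n) = p^(n-1)(p-1)`. -/
theorem stmt_10 (p : ℕ) (hp : p.Prime) (hodd : Odd p) (n : ℕ) (hn : 1 ≤ n) :
    (∀ k : ℤ, IsIrreducibleE (monoSol (p ^ n) (k : ZMod (p ^ n))) ↔ ¬ ((p : ℤ) ∣ k)) ∧
    Nat.card {j : ZMod (p ^ n) // IsIrreducibleE (monoSol (p ^ n) j)} =
      p ^ (n - 1) * (p - 1) ∧
    Nat.totient (p ^ n) = p ^ (n - 1) * (p - 1) := by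
  have := Fact.mk hp
  have hp2 : p ≠ 2 := by rintro rfl; exact absurd hodd (by decide)
  have hn0 : n ≠ 0 := by omega
  have hirr := MonomialSolution.isIrreducibleE_monoSol_iff_isUnit hp2 hn0
  have htot : Nat.totient (p ^ n) = p ^ (n - 1) * (p - 1) := Nat.totient_prime_pow hp (by omega)
  refine ⟨fun k => (hirr k).trans (MonomialSolution.isUnit_intCast_zmod_pow_iff hn0 k), ?_,
    htot⟩
  have : NeZero (p ^ n) := ⟨pow_ne_zero n hp.ne_zero⟩
  rw [← htot, ← ZMod.card_units_eq_totient, ← Nat.card_eq_fintype_card]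
  exact Nat.card_congr ((Equiv.subtypeEquivRight hirr).trans
    Submonoid.unitsTypeEquivIsUnitSubmonoid.toEquiv.symm)
end

section
/- Let n ≥ 1 and N = 2^n, and let k be an integer. The (k mod N)-monomial minimal solution of (E_N) is irreducible if and only if one of the following holds: k is odd; k ≡ 2^{n−1} (mod N); or n ≥ 2 and k = 2a for some odd integer a. Moreover, if n ≥ 3, the number of elements k ∈ Z/NZ for which the k-monomial minimal solution of (E_N) is irreducible equals 3·2^{n−2} + 1. -/
open Matrix

/-!
The powers of `genMat k` are `!![S_j(k), -S_{j-1}(k); S_{j-1}(k), -S_{j-2}(k)]`, where `S_j` are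
the rescaled Chebyshev polynomials of the second kind. Hence `(k, …, k)` of length `j` is a
solution iff `S_{j-1}(k) = 0` and `S_j(k) = ±1`, and a constant solution of size `s` is reducible
iff `S_j(k) = ±1` for some `1 ≤ j ≤ s - 3`: then `(p, k, …, k, p)` with `p = S_j(k) S_{j-1}(k)`
splits off.

If `k` is a unit of the local ring `ZMod (2 ^ n)` and `S_j(k) = e = ±1`, the determinant identity
gives `S_{j-1}(k) (S_{j-1}(k) - e k) = 0`, and one factor is a unit, which produces a solution
shorter than the minimal one. If `k = 2 ^ m u` with `u` odd and `1 ≤ m < n`, the identities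
`S_{2x-1} = S_{x-1} C_x`, `S_{2i} - 1 = S_{i-1} C_{i+1}`, `S_{2i} + 1 = S_i C_i` with the rescaled
Chebyshev polynomials `C` of the first kind compute the `2`-adic valuations: the size is
`2 ^ (n - m + 1)`, and some admissible `S_j(k)` is `±1` exactly when `2 ≤ m ≤ n - 2`.
-/

namespace Int

theorem two_pow_dvd_two_pow_mul_odd_iff {a n : ℕ} {w : ℤ} (hw : Odd w) :
    (2 : ℤ) ^ n ∣ 2 ^ a * w ↔ n ≤ a := by
  refine ⟨fun h => ?_, fun h => (pow_dvd_pow 2 h).mul_right w⟩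
  by_contra! ha
  have h2 : (2 : ℤ) ^ a * 2 ∣ 2 ^ a * w := (pow_succ (2 : ℤ) a ▸ pow_dvd_pow 2 ha).trans h
  exact Int.not_even_iff_odd.2 hw
    (even_iff_two_dvd.2 ((mul_dvd_mul_iff_left (pow_ne_zero a two_ne_zero)).1 h2))

theorem two_pow_dvd_odd_iff {n : ℕ} {w : ℤ} (hw : Odd w) : (2 : ℤ) ^ n ∣ w ↔ n = 0 := by
  simpa using two_pow_dvd_two_pow_mul_odd_iff (a := 0) hw

theorem exists_eq_two_pow_mul_odd {k : ℤ} (hk : k ≠ 0) : ∃ m u, Odd u ∧ k = 2 ^ m * u := by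
  obtain ⟨m, w, hw, hkw⟩ := Nat.exists_eq_two_pow_mul_odd (Int.natAbs_ne_zero.2 hk)
  rcases Int.natAbs_eq k with h | h
  · exact ⟨m, w, hw.natCast, by rw [h, hkw]; push_cast; ring⟩
  · exact ⟨m, -w, hw.natCast.neg, by rw [h, hkw]; push_cast; ring⟩

theorem even_two_pow_mul {m : ℕ} (hm : 1 ≤ m) (u : ℤ) : Even ((2 : ℤ) ^ m * u) :=
  (Int.even_pow.2 ⟨even_two, by omega⟩).mul_right u

theorem two_pow_mul_odd_eq_two_mul_odd_iff {m : ℕ} {u : ℤ} (hu : Odd u) :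
    (∃ a : ℤ, Odd a ∧ 2 ^ m * u = 2 * a) ↔ m = 1 := by
  constructor
  · rintro ⟨a, ha, h⟩
    have h₁ := (two_pow_dvd_two_pow_mul_odd_iff (n := m) (a := 1) ha).1
      (by rw [pow_one, ← h]; exact dvd_mul_right _ _)
    have h₂ := (two_pow_dvd_two_pow_mul_odd_iff (n := 1) (a := m) hu).1
      (by rw [pow_one, h]; exact dvd_mul_right _ _)
    omega
  · rintro rfl
    exact ⟨u, hu, by ring⟩

end Int

open Polynomial.Chebyshev

namespace Polynomial.Chebyshev

section Identities

variable (R : Type*) [CommRing R]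

theorem S_mul_C (m k : ℤ) : S R m * C R k = S R (m + k) + S R (m - k) := by
  induction k using Polynomial.Chebyshev.induct with
  | zero => simp [mul_two]
  | one => rw [S_add_one, S_sub_one, C_one]; ring
  | add_two k ih1 ih2 =>
    have h₁ := S_add_two R (m + k)
    have h₂ := S_sub_two R (m - k)
    have h₃ := C_add_two R k
    linear_combination (norm := ring_nf) S R m * h₃ - h₂ - h₁ - ih2 + (X : R[X]) * ih1
  | neg_add_one k ih1 ih2 =>
    have h₁ := S_add_two R (m + (-k - 1))
    have h₂ := S_sub_two R (m - (-k - 1))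
    have h₃ := C_add_two R (-k - 1)
    linear_combination (norm := ring_nf) S R m * h₃ - h₂ - h₁ - ih2 + (X : R[X]) * ih1

theorem S_sub_one_mul_C_self (i : ℤ) : S R (i - 1) * C R i = S R (2 * i - 1) := by
  linear_combination (norm := ring_nf) S_mul_C R (i - 1) i + S_neg_one R

theorem S_sub_one_mul_C_add_one (i : ℤ) : S R (i - 1) * C R (i + 1) = S R (2 * i) - 1 := by
  linear_combination (norm := ring_nf) S_mul_C R (i - 1) (i + 1) + S_neg_two R

theorem S_mul_C_self (i : ℤ) : S R i * C R i = S R (2 * i) + 1 := by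
  linear_combination (norm := ring_nf) S_mul_C R i i + S_zero R

theorem S_sub_one_sq_sub_mul_S_sub_two (n : ℤ) : S R (n - 1) ^ 2 - S R n * S R (n - 2) = 1 := by
  linear_combination (norm := ring_nf) S_sq_add_S_sq R (n - 1) - S R n * S_eq R n

theorem S_eval_intCast (K : ℤ) (n : ℤ) : (S R n).eval (K : R) = (((S ℤ n).eval K : ℤ) : R) := by
  simpa using (algebraMap_eval_S (R' := R) K n).symm

end Identities

theorem even_S_eval_iff {K : ℤ} (hK : Even K) (j : ℤ) : Even ((S ℤ j).eval K) ↔ Odd j := by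
  induction j using Polynomial.Chebyshev.induct with
  | zero => simp
  | one => simpa using hK
  | add_two n ih1 ih2 =>
    rw [S_add_two, Polynomial.eval_sub, Polynomial.eval_mul, Polynomial.eval_X, Int.even_sub, ih2]
    simp [hK.mul_right, parity_simps]
  | neg_add_one n ih1 ih2 =>
    rw [S_sub_one, Polynomial.eval_sub, Polynomial.eval_mul, Polynomial.eval_X, Int.even_sub, ih2]
    simp [hK.mul_right, parity_simps]

theorem odd_S_eval_of_even {K : ℤ} (hK : Even K) {j : ℤ} (hj : Even j) :
    Odd ((S ℤ j).eval K) := by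
  rw [← Int.not_even_iff_odd, even_S_eval_iff hK, Int.not_odd_iff_even]
  exact hj

variable {m : ℕ} {u : ℤ}

theorem C_eval_two_pow_mul_odd (hm : 1 ≤ m) (hu : Odd u) (i : ℕ) :
    (∃ w, Odd w ∧ (C ℤ (2 * i)).eval (2 ^ m * u) = 2 * w) ∧
      ∃ w, Odd w ∧ (C ℤ (2 * i + 1)).eval (2 ^ m * u) = 2 ^ m * w := by
  have hpow : (2 : ℤ) ^ m = 2 * 2 ^ (m - 1) := by rw [← pow_succ', Nat.sub_add_cancel hm]
  have hKe : Even ((2 : ℤ) ^ m) := Int.even_pow.2 ⟨even_two, by omega⟩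
  induction i with
  | zero => exact ⟨⟨1, odd_one, by simp⟩, ⟨u, hu, by simp⟩⟩
  | succ i ih =>
    obtain ⟨⟨w₀, hw₀, h₀⟩, ⟨w₁, hw₁, h₁⟩⟩ := ih
    have h₂ : (C ℤ (2 * i + 2)).eval (2 ^ m * u) = 2 * (2 ^ m * 2 ^ (m - 1) * u * w₁ - w₀) := by
      rw [C_add_two]
      simp only [Polynomial.eval_sub, Polynomial.eval_mul, Polynomial.eval_X, h₀, h₁]
      linear_combination (2 ^ m * u * w₁) * hpow
    have h₃ : (C ℤ (2 * i + 3)).eval (2 ^ m * u) =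
        2 ^ m * (2 * u * (2 ^ m * 2 ^ (m - 1) * u * w₁ - w₀) - w₁) := by
      rw [show (2 * i + 3 : ℤ) = 2 * i + 1 + 2 by ring, C_add_two,
        show (2 * i + 1 + 1 : ℤ) = 2 * i + 2 by ring]
      simp only [Polynomial.eval_sub, Polynomial.eval_mul, Polynomial.eval_X, h₂, h₁]
      ring
    have hw₂ : Odd (2 ^ m * 2 ^ (m - 1) * u * w₁ - w₀) :=
      ((hKe.mul_right _).mul_right _ |>.mul_right _).sub_odd hw₀
    refine ⟨⟨_, hw₂, by rw [← h₂]; push_cast; ring_nf⟩,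
      ⟨_, (even_two.mul_right _ |>.mul_right _).sub_odd hw₁, by rw [← h₃]; push_cast; ring_nf⟩⟩

theorem S_eval_two_pow_mul_sub_one (hm : 1 ≤ m) (hu : Odd u) (r : ℕ) {w : ℕ} (hw : Odd w) :
    ∃ v, Odd v ∧ (S ℤ (2 ^ (r + 1) * w - 1)).eval (2 ^ m * u) = 2 ^ (m + r) * v := by
  induction r with
  | zero =>
    obtain ⟨i, rfl⟩ := hw
    obtain ⟨c, hc, hC⟩ := (C_eval_two_pow_mul_odd hm hu i).2
    have hS := odd_S_eval_of_even (Int.even_two_pow_mul hm u) (even_two_mul (i : ℤ))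
    refine ⟨_, hS.mul hc, ?_⟩
    rw [show (2 : ℤ) ^ (0 + 1) * ↑(2 * i + 1) - 1 = 2 * (2 * i + 1) - 1 by push_cast; ring,
      ← S_sub_one_mul_C_self, Polynomial.eval_mul, hC, add_sub_cancel_right]
    ring
  | succ r ih =>
    obtain ⟨v, hv, hS⟩ := ih
    obtain ⟨c, hc, hC⟩ := (C_eval_two_pow_mul_odd hm hu (2 ^ r * w)).1
    refine ⟨v * c, hv.mul hc, ?_⟩
    rw [show (2 : ℤ) ^ (r + 1 + 1) * w - 1 = 2 * (2 ^ (r + 1) * w) - 1 by ring,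
      ← S_sub_one_mul_C_self, Polynomial.eval_mul, hS,
      show (2 : ℤ) ^ (r + 1) * w = 2 * ((2 ^ r * w : ℕ) : ℤ) by push_cast; ring, hC]
    ring

theorem S_eval_two_pow (hm : 1 ≤ m) (hu : Odd u) (r : ℕ) :
    ∃ v, Odd v ∧ (S ℤ (2 ^ (r + 2))).eval (2 ^ m * u) = 2 ^ (2 * m + r) * v + 1 := by
  obtain ⟨v, hv, hS⟩ := S_eval_two_pow_mul_sub_one hm hu r odd_one
  obtain ⟨c, hc, hC⟩ := (C_eval_two_pow_mul_odd hm hu (2 ^ r)).2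
  refine ⟨v * c, hv.mul hc, ?_⟩
  have hid := congrArg (Polynomial.eval (2 ^ m * u)) (S_sub_one_mul_C_add_one ℤ (2 ^ (r + 1)))
  push_cast at hS hC
  rw [mul_one] at hS
  rw [show (2 : ℤ) ^ (r + 1) + 1 = 2 * 2 ^ r + 1 by ring] at hid
  simp only [Polynomial.eval_sub, Polynomial.eval_one, Polynomial.eval_mul, hS, hC] at hid
  rw [show (2 : ℤ) ^ (r + 2) = 2 * 2 ^ (r + 1) by ring]
  linear_combination -hid

theorem exists_two_pow_le_of_two_pow_dvd_S_eval_mul_C_eval (hm : 1 ≤ m) (hu : Odd u)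
    {n x y : ℕ} (hn : 2 ≤ n) (hx : x ≠ 0) (hxy : Odd (x + y))
    (h : (2 : ℤ) ^ n ∣ (S ℤ (x - 1)).eval (2 ^ m * u) * (C ℤ y).eval (2 ^ m * u)) :
    ∃ r, 2 ^ (r + 1) ≤ x ∧ n ≤ 2 * m + r := by
  rcases Nat.even_or_odd x with hxe | hxo
  · obtain ⟨i, rfl⟩ : Odd y := by
      simpa [← Nat.not_even_iff_odd, hxe, parity_simps] using hxy
    obtain ⟨_ | r, w, hw, rfl⟩ := Nat.exists_eq_two_pow_mul_odd hx
    · simp [← Nat.not_odd_iff_even, hw] at hxe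
    obtain ⟨v, hv, hS⟩ := S_eval_two_pow_mul_sub_one hm hu r hw
    obtain ⟨c, hc, hC⟩ := (C_eval_two_pow_mul_odd hm hu i).2
    refine ⟨r, Nat.le_mul_of_pos_right _ hw.pos, ?_⟩
    push_cast at h
    rwa [hS, hC, show (2 : ℤ) ^ (m + r) * v * (2 ^ m * c) = 2 ^ (2 * m + r) * (v * c) by ring,
      Int.two_pow_dvd_two_pow_mul_odd_iff (hv.mul hc)] at h
  · obtain ⟨i, rfl⟩ : 2 ∣ y := even_iff_two_dvd.1 (by simpa [hxo, parity_simps] using hxy)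
    obtain ⟨c, hc, hC⟩ := (C_eval_two_pow_mul_odd hm hu i).1
    have hS := odd_S_eval_of_even (Int.even_two_pow_mul hm u) (j := x - 1)
      (by simpa [parity_simps])
    push_cast at h
    rw [hC, show (S ℤ (x - 1)).eval (2 ^ m * u) * (2 * c) = 2 ^ 1 * (_ * c) by ring,
      Int.two_pow_dvd_two_pow_mul_odd_iff (hS.mul hc)] at h
    omega

end Polynomial.Chebyshev

theorem ZMod.isLocalRing_prime_pow (p : ℕ) [Fact p.Prime] {n : ℕ} (hn : n ≠ 0) :
    IsLocalRing (ZMod (p ^ n)) :=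
  have : Fact (1 < p ^ n) := ⟨Nat.one_lt_pow hn (Fact.out : p.Prime).one_lt⟩
  IsLocalRing.of_surjective (PadicInt.toZModPow n) (ZMod.ringHom_surjective _)

section MonomialSolution

variable {N : ℕ}

theorem genMat_pow (k : ZMod N) (j : ℕ) :
    genMat k ^ j = !![(S _ j).eval k, -(S _ (j - 1)).eval k;
      (S _ (j - 1)).eval k, -(S _ (j - 2)).eval k] := by
  induction j with
  | zero => ext i l; fin_cases i <;> fin_cases l <;> simp
  | succ j ih =>
    have h₁ := congrArg (Polynomial.eval k) (S_add_one (ZMod N) j)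
    have h₂ := congrArg (Polynomial.eval k) (S_eq (ZMod N) j)
    simp only [Polynomial.eval_sub, Polynomial.eval_mul, Polynomial.eval_X] at h₁ h₂
    rw [pow_succ, ih, genMat, Nat.cast_succ, add_sub_cancel_right,
      show (j : ℤ) + 1 - 2 = j - 1 by ring]
    ext i l; fin_cases i <;> fin_cases l <;> simp [h₁, h₂] <;> ring

theorem Mword_replicate (k : ZMod N) (j : ℕ) : Mword (List.replicate j k) = genMat k ^ j := by
  rw [Mword, List.reverse_replicate, List.map_replicate, List.prod_replicate]

theorem isSolutionE_replicate_iff (k : ZMod N) (j : ℕ) :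
    IsSolutionE (List.replicate j k) ↔
      (S _ (j - 1)).eval k = 0 ∧ ((S _ j).eval k = 1 ∨ (S _ j).eval k = -1) := by
  have h := congrArg (Polynomial.eval k) (S_eq (ZMod N) j)
  simp only [Polynomial.eval_sub, Polynomial.eval_mul, Polynomial.eval_X] at h
  rw [IsSolutionE, Mword_replicate, genMat_pow, Matrix.one_fin_two,
    show (-!![1, 0; 0, 1] : Matrix (Fin 2) (Fin 2) (ZMod N)) = !![-1, 0; 0, -1] by simp]
  simp only [EmbeddingLike.apply_eq_iff_eq, Matrix.vecCons_inj, neg_eq_zero, and_true]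
  constructor
  · rintro (⟨⟨ha, hb⟩, -⟩ | ⟨⟨ha, hb⟩, -⟩) <;> simp [ha, hb]
  · rintro ⟨hb, ha | ha⟩ <;> simp only [hb, mul_zero, zero_sub] at h <;>
      simp [ha, hb, ← neg_eq_iff_eq_neg.mpr h]

theorem exists_isSolutionE_replicate [NeZero N] (k : ZMod N) :
    ∃ j, 0 < j ∧ IsSolutionE (List.replicate j k) := by
  have hunit : IsUnit (genMat k) := by
    rw [Matrix.isUnit_iff_isUnit_det, genMat, Matrix.det_fin_two_of]
    simp
  refine ⟨orderOf hunit.unit, orderOf_pos _, Or.inl ?_⟩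
  have h := congrArg Units.val (pow_orderOf_eq_one hunit.unit)
  rwa [Units.val_pow_eq_pow_val, IsUnit.unit_spec, Units.val_one, ← Mword_replicate] at h

theorem monomialSize_spec [NeZero N] (k : ZMod N) :
    0 < monomialSize N k ∧ IsSolutionE (List.replicate (monomialSize N k) k) :=
  Nat.sInf_mem (exists_isSolutionE_replicate k)

theorem monomialSize_le {k : ZMod N} {j : ℕ} (hj : 0 < j)
    (hsol : IsSolutionE (List.replicate j k)) : monomialSize N k ≤ j :=
  Nat.sInf_le ⟨hj, hsol⟩

theorem monomialSize_eq {k : ZMod N} {s : ℕ} (hs : 0 < s) (hsol : IsSolutionE (List.replicate s k))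
    (hmin : ∀ j, 0 < j → j < s → ¬ IsSolutionE (List.replicate j k)) :
    monomialSize N k = s :=
  le_antisymm (monomialSize_le hs hsol)
    (le_csInf ⟨s, hs, hsol⟩ fun j hj => not_lt.1 fun hlt => hmin j hj.1 hlt hj.2)

theorem monomialSize_zero [Nontrivial (ZMod N)] : monomialSize N 0 = 2 := by
  refine monomialSize_eq two_pos ?_ fun j hj hj2 => ?_
  · exact (isSolutionE_replicate_iff _ _).2 (by simp [S_two])
  · obtain rfl : j = 1 := by omega
    simpa using (isSolutionE_replicate_iff (0 : ZMod N) 1).not.2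

theorem three_le_monomialSize [NeZero N] [Nontrivial (ZMod N)] {k : ZMod N} (hk : k ≠ 0) :
    3 ≤ monomialSize N k := by
  obtain ⟨hpos, hsol⟩ := monomialSize_spec k
  rw [isSolutionE_replicate_iff] at hsol
  by_contra hlt
  interval_cases h : monomialSize N k <;> simp_all

theorem genMat_mul_mul_genMat (x y A B Q : ZMod N) :
    genMat y * !![A, -B; B, -Q] * genMat x =
      !![y * (A * x - B) - (B * x - Q), B - y * A; A * x - B, -A] := by
  simp only [genMat, Matrix.mul_fin_two]
  congr 1
  ring_nf

theorem Mword_cons_append (x y : ZMod N) (l : List (ZMod N)) :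
    Mword (x :: (l ++ [y])) = genMat y * Mword l * genMat x := by
  simp [Mword, mul_assoc]

theorem oplus_cons_append (a l : List (ZMod N)) (x y : ZMod N) :
    oplus a (x :: (l ++ [y])) =
      (a.headD 0 + y) :: ((a.drop 1).dropLast ++ (a.getLastD 0 + x) :: l) := by
  simp [oplus, List.getLastD_eq_getLast?, List.getLast?_cons]

theorem exists_S_eval_of_isReducibleE_replicate {k : ZMod N} {s : ℕ}
    (h : IsReducibleE (List.replicate s k)) :
    ∃ j, 1 ≤ j ∧ j + 3 ≤ s ∧ ((S _ j).eval k = 1 ∨ (S _ j).eval k = -1) := by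
  obtain ⟨a, b, ha, hb, hsol, hequiv⟩ := h
  have hoab : oplus a b = List.replicate s k := by
    rcases hequiv with ⟨i, hi⟩ | ⟨i, hi⟩ <;> simp [hi]
  obtain ⟨x, mid, y, rfl⟩ : ∃ x mid y, b = x :: (mid ++ [y]) := by
    obtain _ | ⟨x, _ | ⟨z, t⟩⟩ := b
    · simp at hb
    · simp at hb
    · exact ⟨x, (z :: t).dropLast, (z :: t).getLast (List.cons_ne_nil _ _),
        by rw [List.dropLast_append_getLast]⟩
  rw [oplus_cons_append] at hoab
  have hmid : mid = List.replicate mid.length k := List.eq_replicate_iff.2 ⟨rfl, fun z hz =>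
    List.eq_of_mem_replicate (hoab ▸ (by simp [hz] : z ∈ _ :: (_ ++ _ :: mid)))⟩
  have hlen := congrArg List.length hoab
  simp only [List.length_cons, List.length_append, List.length_dropLast, List.length_drop,
    List.length_replicate, List.length_nil] at hlen hb
  refine ⟨mid.length, by omega, by omega, ?_⟩
  rw [IsSolutionE, Mword_cons_append, hmid, Mword_replicate, genMat_pow,
    genMat_mul_mul_genMat] at hsol
  rcases hsol with h | h <;> have h11 := congrFun (congrFun h 1) 1 <;> simp at h11
  · exact Or.inr (neg_eq_iff_eq_neg.1 h11)
  · exact Or.inl h11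

theorem isReducibleE_replicate_of_S_eval {k : ZMod N} {s j : ℕ} (hj : 1 ≤ j) (hjs : j + 3 ≤ s)
    (hS : (S _ j).eval k = 1 ∨ (S _ j).eval k = -1) : IsReducibleE (List.replicate s k) := by
  have hdet := congrArg (Polynomial.eval k) (S_sub_one_sq_sub_mul_S_sub_two (ZMod N) j)
  simp only [Polynomial.eval_sub, Polynomial.eval_mul, Polynomial.eval_pow,
    Polynomial.eval_one] at hdet
  set A := (S (ZMod N) j).eval k
  set B := (S (ZMod N) (j - 1)).eval k
  set Q := (S (ZMod N) (j - 2)).eval k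
  have hA : A * A = 1 := by rcases hS with h | h <;> simp [h]
  have hM : Mword ((A * B) :: (List.replicate j k ++ [A * B])) = (-A) • 1 := by
    rw [Mword_cons_append, Mword_replicate, genMat_pow, genMat_mul_mul_genMat,
      show A * (A * B) - B = 0 by linear_combination B * hA,
      show B - A * B * A = 0 by linear_combination -B * hA,
      show A * B * 0 - (B * (A * B) - Q) = -A by linear_combination (-A) * hdet - Q * hA]
    ext i l; fin_cases i <;> fin_cases l <;> simp [A]
  refine ⟨(k - A * B) :: (List.replicate (s - j - 2) k ++ [k - A * B]),
    (A * B) :: (List.replicate j k ++ [A * B]), by simp; omega, by simp; omega, ?_,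
    Or.inl ⟨0, ?_⟩⟩
  · rcases hS with h | h
    · exact Or.inr (by rw [hM, h, neg_one_smul])
    · exact Or.inl (by rw [hM, h, neg_neg, one_smul])
  · rw [List.rotate_zero, oplus_cons_append]
    refine List.eq_replicate_iff.2 ⟨by simp; omega, ?_⟩
    simp [List.getLastD_eq_getLast?, List.getLast?_cons]
    tauto

theorem isReducibleE_replicate_iff (k : ZMod N) (s : ℕ) :
    IsReducibleE (List.replicate s k) ↔
      ∃ j, 1 ≤ j ∧ j + 3 ≤ s ∧ ((S _ j).eval k = 1 ∨ (S _ j).eval k = -1) :=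
  ⟨exists_S_eval_of_isReducibleE_replicate, fun ⟨_, hj, hjs, hS⟩ =>
    isReducibleE_replicate_of_S_eval hj hjs hS⟩

theorem isIrreducibleE_monoSol_iff [NeZero N] [Nontrivial (ZMod N)] {k : ZMod N} (hk : k ≠ 0) :
    IsIrreducibleE (monoSol N k) ↔
      ∀ j, 1 ≤ j → j + 3 ≤ monomialSize N k → (S _ j).eval k ≠ 1 ∧ (S _ j).eval k ≠ -1 := by
  simp only [IsIrreducibleE, monoSol, isReducibleE_replicate_iff, List.length_replicate,
    (monomialSize_spec k).2, three_le_monomialSize hk, true_and, not_exists, not_and, not_or]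

theorem not_isIrreducibleE_monoSol_zero [Nontrivial (ZMod N)] : ¬ IsIrreducibleE (monoSol N 0) :=
  fun h => by simpa [monoSol, monomialSize_zero] using h.2.1

theorem isIrreducibleE_monoSol_of_isUnit [NeZero N] [IsLocalRing (ZMod N)] {k : ZMod N}
    (hk : IsUnit k) : IsIrreducibleE (monoSol N k) := by
  rw [isIrreducibleE_monoSol_iff hk.ne_zero]
  intro j hj hjs
  by_contra hS
  rw [not_and_or, not_not, not_not] at hS
  have hQ := congrArg (Polynomial.eval k) (S_eq (ZMod N) j)
  have hdet := congrArg (Polynomial.eval k) (S_sub_one_sq_sub_mul_S_sub_two (ZMod N) j)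
  have h₁ := congrArg (Polynomial.eval k) (S_add_one (ZMod N) j)
  have h₂ := congrArg (Polynomial.eval k) (S_add_two (ZMod N) j)
  simp only [Polynomial.eval_sub, Polynomial.eval_mul, Polynomial.eval_pow, Polynomial.eval_X,
    Polynomial.eval_one] at hQ hdet h₁ h₂
  set e := (S (ZMod N) j).eval k
  set p := (S (ZMod N) (j - 1)).eval k
  have he : e * e = 1 := by rcases hS with h | h <;> simp [h]
  have key : p * (p - e * k) = 0 := by linear_combination hdet + e * hQ - he
  rcases IsLocalRing.isUnit_or_isUnit_of_isUnit_add
    (show IsUnit (p + (e * k - p)) by simpa using (IsUnit.of_mul_eq_one e he).mul hk) with hp | hp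
  · -- `p = e k` makes `(k, …, k)` a solution of length `j + 2`
    have hp0 : p = e * k := by linear_combination hp.mul_right_eq_zero.1 key
    have h₁' : (S (ZMod N) (j + 1)).eval k = 0 := by linear_combination h₁ - hp0
    have h₂' : (S (ZMod N) (j + 2)).eval k = -e := by linear_combination h₂ + k * h₁'
    have := monomialSize_le (j := j + 2) (by omega) ((isSolutionE_replicate_iff k _).2 (by
      push_cast
      rw [show (j : ℤ) + 2 - 1 = j + 1 by ring, h₁', h₂']
      rcases hS with h | h <;> simp [h]))
    omega
  · have hp0 : p = 0 := hp.mul_right_eq_zero.1 (by linear_combination -key)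
    have := monomialSize_le hj ((isSolutionE_replicate_iff k j).2 ⟨hp0, hS⟩)
    omega

end MonomialSolution

section TwoPow

variable {n m : ℕ} {u : ℤ}

theorem intCast_eq_intCast_iff_two_pow_dvd {x y : ℤ} :
    (x : ZMod (2 ^ n)) = y ↔ (2 : ℤ) ^ n ∣ x - y := by
  rw [ZMod.intCast_eq_intCast_iff_dvd_sub, ← dvd_neg, neg_sub]
  push_cast
  rfl

theorem intCast_eq_zero_iff_two_pow_dvd {x : ℤ} : (x : ZMod (2 ^ n)) = 0 ↔ (2 : ℤ) ^ n ∣ x := by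
  simpa using intCast_eq_intCast_iff_two_pow_dvd (y := 0)

theorem intCast_eq_one_iff_two_pow_dvd {x : ℤ} : (x : ZMod (2 ^ n)) = 1 ↔ (2 : ℤ) ^ n ∣ x - 1 := by
  simpa using intCast_eq_intCast_iff_two_pow_dvd (y := 1)

theorem intCast_eq_neg_one_iff_two_pow_dvd {x : ℤ} :
    (x : ZMod (2 ^ n)) = -1 ↔ (2 : ℤ) ^ n ∣ x + 1 := by
  simpa using intCast_eq_intCast_iff_two_pow_dvd (y := -1)

theorem intCast_two_pow_mul_odd_eq_iff (hmn : m < n) (hu : Odd u) :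
    ((2 ^ m * u : ℤ) : ZMod (2 ^ n)) = ((2 ^ (n - 1) : ℤ) : ZMod (2 ^ n)) ↔ m = n - 1 := by
  rw [intCast_eq_intCast_iff_two_pow_dvd]
  constructor
  · intro h
    by_contra hne
    rw [show (2 : ℤ) ^ m * u - 2 ^ (n - 1) = 2 ^ m * (u - 2 ^ (n - 1 - m)) by
      rw [mul_sub, ← pow_add, Nat.add_sub_cancel' (by omega)],
      Int.two_pow_dvd_two_pow_mul_odd_iff (hu.sub_even (Int.even_pow.2 ⟨even_two, by omega⟩))] at h
    omega
  · rintro rfl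
    obtain ⟨t, rfl⟩ := hu
    refine ⟨t, ?_⟩
    rw [← Nat.sub_add_cancel (show 1 ≤ n by omega), pow_succ, Nat.add_sub_cancel]
    ring

theorem monomialSize_two_pow_mul_odd (hm : 1 ≤ m) (hmn : m < n) (hu : Odd u) :
    monomialSize (2 ^ n) ((2 ^ m * u : ℤ) : ZMod (2 ^ n)) = 2 ^ (n - m + 1) := by
  refine monomialSize_eq (by positivity) ?_ fun j hj hjs hsol => ?_
  · rw [isSolutionE_replicate_iff, S_eval_intCast, S_eval_intCast, intCast_eq_zero_iff_two_pow_dvd,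
      intCast_eq_one_iff_two_pow_dvd]
    obtain ⟨v, hv, hS⟩ := S_eval_two_pow_mul_sub_one hm hu (n - m) odd_one
    obtain ⟨v', hv', hS'⟩ := S_eval_two_pow hm hu (n - m - 1)
    push_cast
    rw [Nat.cast_one, mul_one] at hS
    rw [hS, show n - m + 1 = n - m - 1 + 2 by omega, hS', add_sub_cancel_right]
    exact ⟨(pow_dvd_pow 2 (by omega)).mul_right v, Or.inl ((pow_dvd_pow 2 (by omega)).mul_right v')⟩
  · rw [isSolutionE_replicate_iff, S_eval_intCast, intCast_eq_zero_iff_two_pow_dvd] at hsol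
    obtain ⟨hdvd, -⟩ := hsol
    rcases Nat.even_or_odd j with hje | hjo
    · obtain ⟨_ | r, w, hw, rfl⟩ := Nat.exists_eq_two_pow_mul_odd hj.ne'
      · simp [← Nat.not_odd_iff_even, hw] at hje
      obtain ⟨v, hv, hS⟩ := S_eval_two_pow_mul_sub_one hm hu r hw
      push_cast at hdvd
      rw [hS, Int.two_pow_dvd_two_pow_mul_odd_iff hv] at hdvd
      have := Nat.pow_le_pow_right two_pos (show n - m + 1 ≤ r + 1 by omega)
      have := Nat.le_mul_of_pos_right (2 ^ (r + 1)) hw.pos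
      omega
    · have hS := odd_S_eval_of_even (Int.even_two_pow_mul hm u) (j := j - 1)
        (by simpa [parity_simps])
      rw [Int.two_pow_dvd_odd_iff hS] at hdvd
      omega

theorem exists_two_pow_le_of_S_eval_eq_one_or_eq_neg_one (hm : 1 ≤ m) (hu : Odd u) (hn : 2 ≤ n)
    {j : ℕ} (hj : 1 ≤ j) (h : (S _ j).eval ((2 ^ m * u : ℤ) : ZMod (2 ^ n)) = 1 ∨
      (S _ j).eval ((2 ^ m * u : ℤ) : ZMod (2 ^ n)) = -1) :
    ∃ i r, j = 2 * i ∧ 2 ^ (r + 1) ≤ i + 1 ∧ n ≤ 2 * m + r := by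
  rw [S_eval_intCast, intCast_eq_one_iff_two_pow_dvd, intCast_eq_neg_one_iff_two_pow_dvd] at h
  rcases Nat.even_or_odd j with ⟨i, rfl⟩ | hjo
  · refine ⟨i, ?_⟩
    rw [← two_mul] at h
    rcases h with h | h
    · have hid := congrArg (Polynomial.eval (2 ^ m * u)) (S_sub_one_mul_C_add_one ℤ i)
      simp only [Polynomial.eval_sub, Polynomial.eval_one, Polynomial.eval_mul] at hid
      push_cast at h
      obtain ⟨r, hr, hnr⟩ := exists_two_pow_le_of_two_pow_dvd_S_eval_mul_C_eval hm hu hn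
        (x := i) (y := i + 1) (by omega) (by simp [parity_simps]) (by push_cast; rwa [hid])
      exact ⟨r, by omega, by omega, hnr⟩
    · have hid := congrArg (Polynomial.eval (2 ^ m * u)) (S_mul_C_self ℤ i)
      simp only [Polynomial.eval_add, Polynomial.eval_one, Polynomial.eval_mul] at hid
      push_cast at h
      obtain ⟨r, hr, hnr⟩ := exists_two_pow_le_of_two_pow_dvd_S_eval_mul_C_eval hm hu hn
        (x := i + 1) (y := i) (by omega) (by simp [parity_simps]) (by simpa [hid])
      exact ⟨r, by omega, hr, hnr⟩
  · have hS := (even_S_eval_iff (Int.even_two_pow_mul hm u) j).2 (by exact_mod_cast hjo)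
    rcases h with h | h
    · rw [Int.two_pow_dvd_odd_iff (hS.sub_odd odd_one)] at h
      omega
    · rw [Int.two_pow_dvd_odd_iff (hS.add_odd odd_one)] at h
      omega

theorem isIrreducibleE_monoSol_two_pow_mul_odd_iff (hm : 1 ≤ m) (hmn : m < n) (hu : Odd u) :
    IsIrreducibleE (monoSol (2 ^ n) ((2 ^ m * u : ℤ) : ZMod (2 ^ n))) ↔ m = 1 ∨ m = n - 1 := by
  have : Fact (1 < 2 ^ n) := ⟨Nat.one_lt_two_pow (by omega)⟩
  have hk : ((2 ^ m * u : ℤ) : ZMod (2 ^ n)) ≠ 0 := by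
    rw [Ne, intCast_eq_zero_iff_two_pow_dvd, Int.two_pow_dvd_two_pow_mul_odd_iff hu]
    omega
  rw [isIrreducibleE_monoSol_iff hk, monomialSize_two_pow_mul_odd hm hmn hu]
  constructor
  · intro h
    by_contra! hm'
    obtain ⟨v, hv, hS⟩ := S_eval_two_pow hm hu (n - m - 2)
    have h4 : 4 ≤ 2 ^ (n - m) := by
      calc 4 = 2 ^ 2 := by norm_num
        _ ≤ 2 ^ (n - m) := Nat.pow_le_pow_right two_pos (by omega)
    refine (h (2 ^ (n - m)) (by omega) (by rw [pow_succ]; omega)).1 ?_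
    rw [S_eval_intCast, intCast_eq_one_iff_two_pow_dvd]
    push_cast
    rw [show n - m = n - m - 2 + 2 by omega, hS, add_sub_cancel_right]
    exact (pow_dvd_pow 2 (by omega)).mul_right v
  · intro hm' j hj hjs
    rw [← not_or]
    intro hS
    obtain ⟨i, r, rfl, hr, hnr⟩ :=
      exists_two_pow_le_of_S_eval_eq_one_or_eq_neg_one hm hu (by omega) hj hS
    rcases hm' with rfl | rfl
    · have := Nat.pow_le_pow_right two_pos hnr
      rw [show n - 1 + 1 = n by omega] at hjs
      rw [pow_add, pow_succ] at this
      omega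
    · rw [show n - (n - 1) + 1 = 2 by omega] at hjs
      omega

end TwoPow

theorem isIrreducibleE_monoSol_two_pow_of_odd {n : ℕ} (hn : 1 ≤ n) {k : ℤ} (hk : Odd k) :
    IsIrreducibleE (monoSol (2 ^ n) (k : ZMod (2 ^ n))) := by
  have : IsLocalRing (ZMod (2 ^ n)) := ZMod.isLocalRing_prime_pow 2 (by omega)
  refine isIrreducibleE_monoSol_of_isUnit ?_
  rw [ZMod.coe_int_isUnit_iff_isCoprime]
  push_cast
  exact (Int.isCoprime_two_left.2 hk).pow_left

theorem isIrreducibleE_monoSol_two_pow_iff {n : ℕ} (hn : 1 ≤ n) (k : ℤ) :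
    IsIrreducibleE (monoSol (2 ^ n) (k : ZMod (2 ^ n))) ↔
      Odd k ∨ (k : ZMod (2 ^ n)) = ((2 ^ (n - 1) : ℤ) : ZMod (2 ^ n)) ∨
        (2 ≤ n ∧ ∃ a : ℤ, Odd a ∧ k = 2 * a) := by
  have : Fact (1 < 2 ^ n) := ⟨Nat.one_lt_two_pow (by omega)⟩
  rcases Int.even_or_odd k with hke | hko
  swap
  · exact iff_of_true (isIrreducibleE_monoSol_two_pow_of_odd hn hko) (Or.inl hko)
  by_cases hk0 : (2 : ℤ) ^ n ∣ k
  · rw [intCast_eq_zero_iff_two_pow_dvd.2 hk0]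
    refine iff_of_false not_isIrreducibleE_monoSol_zero ?_
    rintro (h | h | ⟨hn2, a, ha, rfl⟩)
    · exact Int.not_even_iff_odd.2 h hke
    · rw [eq_comm, intCast_eq_zero_iff_two_pow_dvd] at h
      have := (Int.two_pow_dvd_two_pow_mul_odd_iff (a := n - 1) odd_one).1 (by simpa using h)
      omega
    · have := (Int.two_pow_dvd_two_pow_mul_odd_iff (n := n) (a := 1) ha).1 (by rwa [pow_one])
      omega
  obtain ⟨m, u, hu, rfl⟩ := Int.exists_eq_two_pow_mul_odd (k := k) (by rintro rfl; simp at hk0)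
  have hm : 1 ≤ m := by
    by_contra! h
    rw [Nat.lt_one_iff.1 h, pow_zero, one_mul] at hke
    exact Int.not_even_iff_odd.2 hu hke
  have hmn : m < n := by
    by_contra! h
    exact hk0 ((pow_dvd_pow 2 h).mul_right u)
  rw [isIrreducibleE_monoSol_two_pow_mul_odd_iff hm hmn hu, intCast_two_pow_mul_odd_eq_iff hmn hu,
    Int.two_pow_mul_odd_eq_two_mul_odd_iff hu]
  simp only [Int.not_odd_iff_even.2 hke, false_or]
  omega

open Finset in
theorem ZMod.natCard_subtype_eq_card_filter_range {N : ℕ} [NeZero N] (P : ZMod N → Prop)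
    [DecidablePred P] : Nat.card {j // P j} = #{v ∈ range N | P ((v : ℕ) : ZMod N)} := by
  rw [Nat.card_eq_fintype_card, Fintype.card_subtype]
  refine card_nbij' ZMod.val (↑) (fun j hj => ?_) (fun v hv => ?_)
    (fun j _ => ZMod.natCast_zmod_val j) (fun v hv => ZMod.val_cast_of_lt (by simp at hv; exact hv.1))
  · simpa [ZMod.val_lt] using hj
  · simp at hv
    simpa using hv.2

open Finset in
theorem card_filter_mod_four_ne_zero_or_eq_two_pow (n : ℕ) (hn : 3 ≤ n) :
    #{v ∈ range (2 ^ n) | v % 4 ≠ 0 ∨ v = 2 ^ (n - 1)} = 3 * 2 ^ (n - 2) + 1 := by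
  have h₁ : (2 : ℕ) ^ n = 4 * 2 ^ (n - 2) := by
    rw [show n = n - 2 + 2 by omega, pow_add]; norm_num; ring
  have h₂ : (2 : ℕ) ^ (n - 1) = 4 * 2 ^ (n - 3) := by
    rw [show n - 1 = n - 3 + 2 by omega, pow_add]; norm_num; ring
  have h₃ : (2 : ℕ) ^ (n - 2) = 2 * 2 ^ (n - 3) := by
    rw [show n - 2 = n - 3 + 1 by omega, pow_succ]; ring
  have h₄ : 0 < 2 ^ (n - 3) := by positivity
  have hmul : #{v ∈ range (2 ^ n) | v % 4 = 0} = 2 ^ (n - 2) := by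
    have := Nat.count_modEq_card (b := 2 ^ n) (r := 4) (by norm_num) 0
    rw [Nat.count_eq_card_filter_range] at this
    simpa [Nat.ModEq, h₁] using this
  have hcompl := card_filter_add_card_filter_not (s := range (2 ^ n)) (fun v => v % 4 = 0)
  rw [filter_or, card_union_of_disjoint, filter_eq', if_pos (mem_range.2 (by omega)),
    card_singleton]
  · simp only [card_range, hmul, ← ne_eq] at hcompl
    omega
  · rw [disjoint_filter]
    intro v _ hv
    omega

theorem isIrreducibleE_monoSol_two_pow_natCast_iff {n v : ℕ} (hn : 2 ≤ n) (hv : v < 2 ^ n) :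
    IsIrreducibleE (monoSol (2 ^ n) (v : ZMod (2 ^ n))) ↔ v % 4 ≠ 0 ∨ v = 2 ^ (n - 1) := by
  have h := isIrreducibleE_monoSol_two_pow_iff (n := n) (by omega) (v : ℤ)
  have hlt : 2 ^ (n - 1) < 2 ^ n := Nat.pow_lt_pow_right one_lt_two (by omega)
  rw [Int.cast_natCast] at h
  rw [h, Int.odd_coe_nat, Nat.odd_iff, show ((2 ^ (n - 1) : ℤ) : ZMod (2 ^ n)) = (2 ^ (n - 1) : ℕ)
    by push_cast; rfl, ZMod.natCast_eq_natCast_iff', Nat.mod_eq_of_lt hv, Nat.mod_eq_of_lt hlt]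
  have h2 : (∃ a : ℤ, Odd a ∧ (v : ℤ) = 2 * a) ↔ v % 4 = 2 := by
    constructor
    · rintro ⟨a, ⟨t, rfl⟩, h⟩
      omega
    · intro h
      exact ⟨v / 2, ⟨v / 4, by omega⟩, by omega⟩
  rw [h2]
  omega

/-- for `N = 2^n` with `n ≥ 1`, the `(k mod N)`-monomial minimal solution
of `(E_N)` is irreducible iff `k` is odd, or `k ≡ 2^(n-1) (mod N)`, or `n ≥ 2` and
`k = 2a` with `a` odd; moreover if `n ≥ 3`, the number of `k ∈ ZMod N` with irreducible
`k`-monomial minimal solution equals `3·2^(n-2) + 1`. -/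
theorem stmt_11 (n : ℕ) (hn : 1 ≤ n) :
    (∀ k : ℤ, IsIrreducibleE (monoSol (2 ^ n) (k : ZMod (2 ^ n))) ↔
      (Odd k ∨ (k : ZMod (2 ^ n)) = ((2 ^ (n - 1) : ℤ) : ZMod (2 ^ n)) ∨
        (2 ≤ n ∧ ∃ a : ℤ, Odd a ∧ k = 2 * a))) ∧
    (3 ≤ n → Nat.card {j : ZMod (2 ^ n) // IsIrreducibleE (monoSol (2 ^ n) j)} =
      3 * 2 ^ (n - 2) + 1) := by
  refine ⟨isIrreducibleE_monoSol_two_pow_iff hn, fun hn3 => ?_⟩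
  classical
  rw [ZMod.natCard_subtype_eq_card_filter_range, Finset.filter_congr fun v hv =>
    isIrreducibleE_monoSol_two_pow_natCast_iff (by omega) (Finset.mem_range.1 hv)]
  exact card_filter_mod_four_ne_zero_or_eq_two_pow n hn3
end
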